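/- Let n ≥ 2 and let f : ℝⁿ → ℝ be indistinguishable (invariant under every permutation of its n arguments) and twice continuously differentiable in a neighborhood of the symmetric point c^⊗n = (c,…,c). Let r̄(x) = f(x,…,x) be the diagonal restriction. Then for every h ∈ ℝⁿ with Σ_{j=1}^n h_j = 0, the second-order Taylor term of f at c^⊗n in direction h equals (1/2) Σ_{j,j'} h_j h_{j'} ∂²f/∂a_j∂a_{j'} (c^⊗n) = (n / (2(n−1))) · ( −(1/n²) r̄''(c) + ∂²f/∂a_1² (c^⊗n) ) · Σ_{j=1}^n h_j². -/

import Mathlib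

/-!
Invariance of `f` under all coordinate permutations makes the Hessian at the symmetric point
`c^⊗n` invariant under simultaneous permutation of rows and columns; as `Sₙ` acts transitively
on ordered pairs of distinct indices, it has one diagonal value `α` and one off-diagonal value
`β`. Its quadratic form is then `β (∑ hⱼ)² + (α - β) ∑ hⱼ²`, which gives `(α - β) ∑ hⱼ²` on
zero-sum directions and `r̄''(c) = n α + n (n - 1) β` along the diagonal `(1, …, 1)`.
Eliminating `β` yields the formula.
-/

open Filter Topology

section SecondDerivative

variable {𝕜 E F G : Type*} [NontriviallyNormedField 𝕜]
  [NormedAddCommGroup E] [NormedSpace 𝕜 E] [NormedAddCommGroup F] [NormedSpace 𝕜 F]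
  [NormedAddCommGroup G] [NormedSpace 𝕜 G]

theorem fderiv_clm_apply_const {c : E → F →L[𝕜] G} {x : E} (hc : DifferentiableAt 𝕜 c x)
    (u : F) (v : E) : fderiv 𝕜 (fun y => c y u) x v = fderiv 𝕜 c x v u := by
  simp [fderiv_clm_apply hc (differentiableAt_const u)]

theorem fderiv_fderiv_map_map_of_comp_eq {f : E → F} (A : E ≃L[𝕜] E) (hfA : f ∘ A = f)
    {x : E} (hx : A x = x) (u v : E) :
    fderiv 𝕜 (fderiv 𝕜 f) x (A u) (A v) = fderiv 𝕜 (fderiv 𝕜 f) x u v := by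
  -- precomposition with `A`
  set P : (E →L[𝕜] F) ≃L[𝕜] (E →L[𝕜] F) := A.symm.arrowCongr (.refl 𝕜 F)
  have hf' : fderiv 𝕜 f = P ∘ fderiv 𝕜 f ∘ A := by
    ext y : 1
    conv_lhs => rw [← hfA, A.comp_right_fderiv]
    ext w; simp [P]
  have h := congr_arg (fun φ => φ u v) (congr_arg (fderiv 𝕜 · x) hf')
  simp only [P.comp_fderiv, A.comp_right_fderiv, hx] at h
  simpa [P] using h.symm

theorem deriv_deriv_comp_smul {f : E → F} {v : E} {c : 𝕜}
    (hf : ∀ᶠ y in 𝓝 (c • v), DifferentiableAt 𝕜 f y)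
    (hf' : DifferentiableAt 𝕜 (fderiv 𝕜 f) (c • v)) :
    deriv (deriv fun t => f (t • v)) c = fderiv 𝕜 (fderiv 𝕜 f) (c • v) v v := by
  have hline : ∀ t : 𝕜, HasDerivAt (fun t => t • v) v t := fun t => by
    simpa using (hasDerivAt_id t).smul_const v
  have hderiv : deriv (fun t => f (t • v)) =ᶠ[𝓝 c] fun t => fderiv 𝕜 f (t • v) v := by
    have : Tendsto (fun t : 𝕜 => t • v) (𝓝 c) (𝓝 (c • v)) := (hline c).continuousAt
    filter_upwards [this.eventually hf] with t ht
    exact (ht.hasFDerivAt.comp_hasDerivAt t (hline t)).deriv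
  have h2 : HasDerivAt (fun t => fderiv 𝕜 f (t • v)) (fderiv 𝕜 (fderiv 𝕜 f) (c • v) v) c :=
    hf'.hasFDerivAt.comp_hasDerivAt c (hline c)
  rw [hderiv.deriv_eq]
  exact (h2.clm_apply (hasDerivAt_const c v)).deriv.trans (by simp)

end SecondDerivative

theorem eq_ite_of_perm_invariant {ι α : Type*} [DecidableEq ι] (D : ι → ι → α)
    (hD : ∀ (σ : Equiv.Perm ι) i j, D (σ i) (σ j) = D i j) {i₀ i₁ : ι} (h : i₀ ≠ i₁) (i j : ι) :
    D i j = if i = j then D i₀ i₀ else D i₀ i₁ := by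
  split_ifs with hij
  · subst hij
    simpa using hD (Equiv.swap i₀ i) i₀ i₀
  · -- `swap (τ i₁) j * τ` sends `i₀ ↦ i` and `i₁ ↦ j`
    set τ := Equiv.swap i₀ i
    have hτ : τ i₁ ≠ i := by
      rw [← Equiv.swap_apply_left i₀ i]
      exact τ.injective.ne h.symm
    have := hD (Equiv.swap (τ i₁) j * τ) i₀ i₁
    rwa [Equiv.Perm.mul_apply, Equiv.Perm.mul_apply, Equiv.swap_apply_left, Equiv.swap_apply_left,
      Equiv.swap_apply_of_ne_of_ne hτ.symm hij] at this

theorem sum_sum_mul_mul_ite {ι R : Type*} [Fintype ι] [DecidableEq ι] [CommRing R]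
    (u v : ι → R) (a b : R) :
    ∑ i, ∑ j, u i * v j * (if i = j then a else b) =
      b * (∑ i, u i) * (∑ j, v j) + (a - b) * ∑ i, u i * v i := by
  have : ∀ i j, u i * v j * (if i = j then a else b) =
      b * (u i * v j) + if i = j then (a - b) * (u i * v j) else 0 := by
    intro i j; split_ifs <;> ring
  simp only [this, Finset.sum_add_distrib, Finset.sum_ite_eq, Finset.mem_univ, if_true,
    ← Finset.mul_sum, Finset.sum_mul_sum, mul_assoc]

theorem ContinuousLinearMap.apply_apply_eq_sum_sum {ι 𝕜 : Type*} [Fintype ι] [DecidableEq ι]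
    [NontriviallyNormedField 𝕜] (B : (ι → 𝕜) →L[𝕜] (ι → 𝕜) →L[𝕜] 𝕜) (u v : ι → 𝕜) :
    B u v = ∑ i, ∑ j, u i * v j * B (Pi.single i 1) (Pi.single j 1) := by
  conv_lhs => rw [pi_eq_sum_univ' u, pi_eq_sum_univ' v]
  simp only [map_sum, map_smul, sum_apply, smul_apply, smul_eq_mul, Finset.mul_sum, mul_left_comm,
    mul_assoc]
  exact Finset.sum_comm

theorem fderiv_fderiv_single_perm_of_symmetric {ι 𝕜 F : Type*} [Fintype ι] [DecidableEq ι]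
    [NontriviallyNormedField 𝕜] [CompleteSpace 𝕜] [NormedAddCommGroup F] [NormedSpace 𝕜 F]
    {f : (ι → 𝕜) → F} (hsym : ∀ (σ : Equiv.Perm ι) (a : ι → 𝕜), f (a ∘ σ) = f a) (c : 𝕜)
    (σ : Equiv.Perm ι) (i j : ι) :
    fderiv 𝕜 (fderiv 𝕜 f) (fun _ => c) (Pi.single (σ i) 1) (Pi.single (σ j) 1) =
      fderiv 𝕜 (fderiv 𝕜 f) (fun _ => c) (Pi.single i 1) (Pi.single j 1) := by
  set A := (LinearEquiv.funCongrLeft 𝕜 𝕜 σ.symm).toContinuousLinearEquiv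
  have hA : ∀ k, A (Pi.single k 1) = Pi.single (σ k) 1 := fun k =>
    (Pi.single_comp_equiv σ.symm k 1).trans (by rw [Equiv.symm_symm])
  rw [← hA, ← hA]
  exact fderiv_fderiv_map_map_of_comp_eq A (funext fun a => hsym σ.symm a) rfl _ _

/-- For an indistinguishable function `f : ℝⁿ → ℝ` which is C² on an
open neighborhood of the symmetric point `(c,…,c)`, with diagonal restriction
`r̄(x) = f(x,…,x)`, the second-order Taylor term in any zero-mean direction `h`
equals `(n/(2(n−1))) · (−(1/n²) r̄''(c) + ∂²f/∂a₁²(c^⊗n)) · Σ h_j²`. -/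
theorem stmt_5 (n : ℕ) (hn : 2 ≤ n) (f : (Fin n → ℝ) → ℝ) (c : ℝ)
    (s : Set (Fin n → ℝ)) (hs : IsOpen s) (hc : (fun _ => c) ∈ s)
    (hsym : ∀ (π : Equiv.Perm (Fin n)) (a : Fin n → ℝ), f (a ∘ π) = f a)
    (hf : ContDiffOn ℝ 2 f s) :
    ∀ h : Fin n → ℝ, ∑ j, h j = 0 →
      (1 / 2) * ∑ j, ∑ j', h j * h j' *
          fderiv ℝ (fun y => fderiv ℝ f y (Pi.single j' 1)) (fun _ => c) (Pi.single j 1) =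
        ((n : ℝ) / (2 * ((n : ℝ) - 1))) *
          (-(1 / (n : ℝ) ^ 2) * deriv (deriv (fun x : ℝ => f (fun _ => x))) c +
            fderiv ℝ (fun y => fderiv ℝ f y (Pi.single (⟨0, by omega⟩ : Fin n) 1))
              (fun _ => c) (Pi.single (⟨0, by omega⟩ : Fin n) 1)) *
          ∑ j, (h j) ^ 2 := by
  intro h hsum
  set x₀ : Fin n → ℝ := fun _ => c
  have hx₀ : (c • fun _ => 1 : Fin n → ℝ) = x₀ := by ext; simp [x₀]
  have hf₂ : ContDiffAt ℝ 2 f x₀ := hf.contDiffAt (hs.mem_nhds hc)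
  have hf' : DifferentiableAt ℝ (fderiv ℝ f) x₀ :=
    (hf₂.fderiv_right (m := 1) le_rfl).differentiableAt one_ne_zero
  have hdiag : deriv (deriv fun x : ℝ => f (fun _ => x)) c =
      fderiv ℝ (fderiv ℝ f) x₀ (fun _ => 1) (fun _ => 1) := by
    have hfd := (hf₂.eventually (by simp)).mono fun y hy => hy.differentiableAt two_ne_zero
    rw [← hx₀] at hfd hf'
    simpa [Pi.smul_def, hx₀] using deriv_deriv_comp_smul hfd hf'
  obtain ⟨α, β, hD⟩ : ∃ α β, ∀ i j,
      fderiv ℝ (fderiv ℝ f) x₀ (Pi.single i 1) (Pi.single j 1) = if i = j then α else β :=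
    ⟨_, _, eq_ite_of_perm_invariant _ (fderiv_fderiv_single_perm_of_symmetric hsym c)
      (i₀ := ⟨0, by omega⟩) (i₁ := ⟨1, by omega⟩) (by simp [Fin.ext_iff])⟩
  rw [hdiag, ContinuousLinearMap.apply_apply_eq_sum_sum]
  simp only [fderiv_clm_apply_const hf', hD]
  rw [sum_sum_mul_mul_ite, sum_sum_mul_mul_ite, hsum]
  simp only [if_true, mul_one, Finset.sum_const, Finset.card_univ, Fintype.card_fin, nsmul_eq_mul]
  have hn1 : (n : ℝ) - 1 ≠ 0 := by
    rw [sub_ne_zero]; exact_mod_cast (by omega : n ≠ 1)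
  field_simp
  ring
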